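/- RPL(⊙) and LΠ½(→_P⁻) have the same expressive power: for each formula of RPL(⊙) there exists an equivalent formula of LΠ½(→_P⁻), and for each formula of LΠ½(→_P⁻) there exists an equivalent formula of RPL(⊙). -/

import Mathlib

/-- Terms of ℚ[ReLU, x_i]_{i∈ℕ}; variables are indexed by ℕ. -/
inductive RTerm : Type where
  | const : ℚ → RTerm
  | var : ℕ → RTerm
  | add : RTerm → RTerm → RTerm
  | mul : RTerm → RTerm → RTerm
  | relu : RTerm → RTerm

/-- Value of a term under an evaluation map `E : ℕ → ℝ`. -/
def RTerm.eval (E : ℕ → ℝ) : RTerm → ℝ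
  | .const r => (r : ℝ)
  | .var x => E x
  | .add t t' => t.eval E + t'.eval E
  | .mul t t' => t.eval E * t'.eval E
  | .relu t => max 0 (t.eval E)

/-- Degree of a term. -/
def RTerm.deg : RTerm → ℕ
  | .const _ => 0
  | .var _ => 1
  | .add t t' => max t.deg t'.deg
  | .mul t t' => t.deg + t'.deg
  | .relu t => t.deg

/-- Subterms of a term. -/
def RTerm.subt : RTerm → List RTerm
  | .const r => [.const r]
  | .var x => [.var x]
  | .add t t' => t.subt ++ t'.subt ++ [.add t t']
  | .mul t t' => t.subt ++ t'.subt ++ [.mul t t']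
  | .relu t => t.subt ++ [.relu t]

/-- Proto-neurons. -/
inductive RTerm.ProtoNeuron : RTerm → Prop where
  | const (r : ℚ) : RTerm.ProtoNeuron (.const r)
  | var (x : ℕ) : RTerm.ProtoNeuron (.var x)
  | add {t t'} : RTerm.ProtoNeuron t → RTerm.ProtoNeuron t' → RTerm.ProtoNeuron (.add t t')
  | mul {t t'} : RTerm.ProtoNeuron t → RTerm.ProtoNeuron t' → t.deg + t'.deg ≤ 1 →
      RTerm.ProtoNeuron (.mul t t')
  | relu {t} : RTerm.ProtoNeuron t → RTerm.ProtoNeuron (.relu t)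

/-- `ReLU (w₁·n₁ + (w₂·n₂ + (⋯ + b)))`. -/
def layerNeuron (ws : List (ℚ × RTerm)) (b : ℚ) : RTerm :=
  .relu (ws.foldr (fun wt acc => .add (.mul (.const wt.1) wt.2) acc) (.const b))

/-- Rational-parameter ReLU-activated neural networks of a given depth,
identified with the tuples of their output neurons. -/
inductive IsNN : ℕ → List RTerm → Prop where
  | input (ys : List ℕ) : ys ≠ [] → ys.Nodup → IsNN 0 (ys.map RTerm.var)
  | layer {d : ℕ} {prev : List RTerm} (hprev : IsNN d prev)
      (params : List (List ℚ × ℚ)) (hne : params ≠ [])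
      (hlen : ∀ p ∈ params, p.1.length = prev.length) :
      IsNN (d + 1) (params.map fun p => layerNeuron (p.1.zip prev) p.2)

/-- A neuron is a component of some neural network. -/
def IsNeuron (t : RTerm) : Prop := ∃ d N, IsNN d N ∧ t ∈ N

/-- Formulae of RPL(⊙): truth constants r̄ for r ∈ ℚ ∩ [0,1], proposition
symbols, →_L and ⊙. -/
inductive RPLForm : Type where
  | const : {r : ℚ // 0 ≤ r ∧ r ≤ 1} → RPLForm
  | prop : ℕ → RPLForm
  | impL : RPLForm → RPLForm → RPLForm
  | conj : RPLForm → RPLForm → RPLForm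

/-- A valuation assigns to every proposition symbol a value in [0,1]. -/
def IsValuation (V : ℕ → ℝ) : Prop := ∀ p, 0 ≤ V p ∧ V p ≤ 1

/-- Truth value of an RPL(⊙)-formula under a valuation. -/
def RPLForm.val (V : ℕ → ℝ) : RPLForm → ℝ
  | .const r => (r.1 : ℝ)
  | .prop p => V p
  | .impL φ ψ => min 1 (1 - φ.val V + ψ.val V)
  | .conj φ ψ => φ.val V * ψ.val V

/-- Formulae with no proposition symbols. -/
def RPLForm.propFree : RPLForm → Prop
  | .const _ => True
  | .prop _ => False
  | .impL φ ψ => φ.propFree ∧ ψ.propFree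
  | .conj φ ψ => φ.propFree ∧ ψ.propFree

/-- RPL: the ⊙-free fragment of RPL(⊙). -/
def RPLForm.noConj : RPLForm → Prop
  | .const _ => True
  | .prop _ => True
  | .impL φ ψ => φ.noConj ∧ ψ.noConj
  | .conj _ _ => False

/-- Łukasiewicz logic: the only truth constant is 0̄ and there is no ⊙. -/
def RPLForm.isLuk : RPLForm → Prop
  | .const r => r.1 = 0
  | .prop _ => True
  | .impL φ ψ => φ.isLuk ∧ ψ.isLuk
  | .conj _ _ => False

/-- The fragment RPL(⊙)_{≤ n}. -/
inductive RPLForm.InFrag : ℕ → RPLForm → Prop where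
  | propfree {n φ} : RPLForm.propFree φ → RPLForm.InFrag n φ
  | prop {n} (p : ℕ) : RPLForm.InFrag (n + 1) (.prop p)
  | up {n φ} : RPLForm.InFrag n φ → RPLForm.InFrag (n + 1) φ
  | conj {n i j α β} : RPLForm.InFrag i α → RPLForm.InFrag j β → i + j ≤ n + 1 →
      RPLForm.InFrag (n + 1) (.conj α β)
  | impL {n φ ψ} : RPLForm.InFrag (n + 1) φ → RPLForm.InFrag (n + 1) ψ →
      RPLForm.InFrag (n + 1) (.impL φ ψ)

/-- Formulae of LΠ½. -/
inductive LPiForm : Type where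
  | zero : LPiForm
  | half : LPiForm
  | prop : ℕ → LPiForm
  | impL : LPiForm → LPiForm → LPiForm
  | conj : LPiForm → LPiForm → LPiForm
  | impP : LPiForm → LPiForm → LPiForm

/-- Truth value of an LΠ½-formula under a valuation. -/
noncomputable def LPiForm.val (V : ℕ → ℝ) : LPiForm → ℝ
  | .zero => 0
  | .half => 1 / 2
  | .prop p => V p
  | .impL φ ψ => min 1 (1 - φ.val V + ψ.val V)
  | .conj φ ψ => φ.val V * ψ.val V
  | .impP φ ψ => if φ.val V ≤ ψ.val V then 1 else ψ.val V / φ.val V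

/-- LΠ½-formulae with no proposition symbols (LΠ½_{≤0}). -/
def LPiForm.propFree : LPiForm → Prop
  | .zero => True
  | .half => True
  | .prop _ => False
  | .impL φ ψ => φ.propFree ∧ ψ.propFree
  | .conj φ ψ => φ.propFree ∧ ψ.propFree
  | .impP φ ψ => φ.propFree ∧ ψ.propFree

/-- LΠ½(→_P⁻): no proposition symbols in the scope of →_P. -/
inductive LPiForm.InPF : LPiForm → Prop where
  | base {φ} : LPiForm.propFree φ → LPiForm.InPF φ
  | prop (p : ℕ) : LPiForm.InPF (.prop p)
  | impL {φ ψ} : LPiForm.InPF φ → LPiForm.InPF ψ → LPiForm.InPF (.impL φ ψ)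
  | conj {φ ψ} : LPiForm.InPF φ → LPiForm.InPF ψ → LPiForm.InPF (.conj φ ψ)

/-- LΠ½(⊙⁻, →_P⁻): no proposition symbols in the scope of ⊙ or →_P. -/
inductive LPiForm.InPFF : LPiForm → Prop where
  | base {φ} : LPiForm.propFree φ → LPiForm.InPFF φ
  | prop (p : ℕ) : LPiForm.InPFF (.prop p)
  | impL {φ ψ} : LPiForm.InPFF φ → LPiForm.InPFF ψ → LPiForm.InPFF (.impL φ ψ)

/-- The fragment LΠ½(→_P⁻)_{≤ n}. -/
inductive LPiForm.InFragPF : ℕ → LPiForm → Prop where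
  | propfree {n φ} : LPiForm.propFree φ → LPiForm.InFragPF n φ
  | prop {n} (p : ℕ) : LPiForm.InFragPF (n + 1) (.prop p)
  | up {n φ} : LPiForm.InFragPF n φ → LPiForm.InFragPF (n + 1) φ
  | conj {n i j α β} : LPiForm.InFragPF i α → LPiForm.InFragPF j β → i + j ≤ n + 1 →
      LPiForm.InFragPF (n + 1) (.conj α β)
  | impL {n φ ψ} : LPiForm.InFragPF (n + 1) φ → LPiForm.InFragPF (n + 1) ψ →
      LPiForm.InFragPF (n + 1) (.impL φ ψ)

/-- scale_k(x) = (k + x)/(2k). -/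
noncomputable def scaleK (k x : ℝ) : ℝ := (k + x) / (2 * k)

/-- Equivalence of a term and an RPL(⊙)-formula (the bijection p ↦ x_p is
the identity on ℕ). -/
def TermFormEquiv (t : RTerm) (φ : RPLForm) : Prop :=
  ∀ (E V : ℕ → ℝ), IsValuation V → (∀ x, E x = V x) → t.eval E = φ.val V

/-- (i,k)-equivalence of a formula to a term. -/
def IKEquiv (i k : ℝ) (φ : RPLForm) (t : RTerm) : Prop :=
  ∀ E : ℕ → ℝ, (∀ x, -i ≤ E x ∧ E x ≤ i) →
    φ.val (fun p => scaleK k (E p)) = scaleK k (t.eval E)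

/-- k-equivalence of formulae. -/
def KEquiv (k : ℝ) (ψ φ : RPLForm) : Prop :=
  ∀ V V' : ℕ → ℝ, IsValuation V → IsValuation V' → (∀ p, V' p = scaleK k (V p)) →
    ψ.val V' = scaleK k (φ.val V)

/-- Equivalence of terms. -/
def TermEquiv (t t' : RTerm) : Prop := ∀ E : ℕ → ℝ, t.eval E = t'.eval E

/-- [0,1]-equivalence of terms. -/
def TermEquiv01 (t t' : RTerm) : Prop :=
  ∀ E : ℕ → ℝ, (∀ x, 0 ≤ E x ∧ E x ≤ 1) → t.eval E = t'.eval E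

/-- Equivalence of an RPL(⊙)-formula and an LΠ½-formula. -/
def RLEquiv (φ : RPLForm) (ψ : LPiForm) : Prop :=
  ∀ V : ℕ → ℝ, IsValuation V → φ.val V = ψ.val V

/-- The truth constant 0̄. -/
def RPLForm.zeroC : RPLForm := .const ⟨0, by norm_num⟩

/-- ¬_L φ := φ →_L 0̄. -/
def RPLForm.negL (φ : RPLForm) : RPLForm := φ.impL RPLForm.zeroC

/-- φ ⊕ ψ := ¬_L φ →_L ψ. -/
def RPLForm.oplus (φ ψ : RPLForm) : RPLForm := φ.negL.impL ψ

/-- φ ⊗ ψ := ¬_L (φ →_L ¬_L ψ). -/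
def RPLForm.otimes (φ ψ : RPLForm) : RPLForm := (φ.impL ψ.negL).negL

/-- φ ⊖ ψ := φ ⊗ ¬_L ψ  (semantics: max{0, V(φ) − V(ψ)}). -/
def RPLForm.ominus (φ ψ : RPLForm) : RPLForm := φ.otimes ψ.negL

/-- φ ⊕' ψ := (φ ⊖ ¼̄) ⊕ (ψ ⊖ ¼̄). -/
def RPLForm.oplus' (φ ψ : RPLForm) : RPLForm :=
  (φ.ominus (.const ⟨1/4, by norm_num⟩)).oplus (ψ.ominus (.const ⟨1/4, by norm_num⟩))

/-- The iterated sum ⨀_n. -/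
def RPLForm.bigOplus : ℕ → RPLForm → RPLForm
  | 0, _ => RPLForm.zeroC
  | n + 1, φ => (RPLForm.bigOplus n φ).oplus φ

/-- The iterated operator ⨀'_n; `Nat.clog 2 n` is the least j with n ≤ 2^j. -/
def RPLForm.bigOplus' : ℕ → RPLForm → RPLForm
  | 0, _ => .const ⟨1/2, by norm_num⟩
  | 1, φ => φ
  | n + 2, φ =>
      RPLForm.oplus' (RPLForm.bigOplus' (2 ^ (Nat.clog 2 (n + 2) - 1)) φ)
        (RPLForm.bigOplus' ((n + 2) - 2 ^ (Nat.clog 2 (n + 2) - 1)) φ)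
  termination_by n _ => n
  decreasing_by
  · exact Nat.pow_pred_clog_lt_self (b := 2) (x := n + 2) (by norm_num) (by omega)
  · have h1 : 0 < 2 ^ (Nat.clog 2 (n + 2) - 1) := pow_pos (by norm_num) _
    omega

theorem inv2k_mem (k : ℕ) (hk : 1 ≤ k) : 0 ≤ (1 / (2 * (k : ℚ))) ∧ (1 / (2 * (k : ℚ))) ≤ 1 := by
  have h : (1 : ℚ) ≤ (k : ℚ) := by exact_mod_cast hk
  constructor
  · positivity
  · rw [div_le_one (by linarith)]
    linarith

/-- φ ⊙^k ψ := ⨀_k((⨀_2(φ ⊙ ψ) ⊕ (1/(2k))̄) ⊖ (φ ⊕' ψ)). -/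
def RPLForm.odotPow (k : ℕ) (hk : 1 ≤ k) (φ ψ : RPLForm) : RPLForm :=
  RPLForm.bigOplus k
    (((RPLForm.bigOplus 2 (φ.conj ψ)).oplus
        (.const ⟨1 / (2 * (k : ℚ)), inv2k_mem k hk⟩)).ominus (φ.oplus' ψ))

/-- (1/2)^k as an LΠ½ formula. -/
def LPiForm.powHalf : ℕ → LPiForm
  | 0 => .impL .zero .zero
  | k + 1 => .conj .half (LPiForm.powHalf k)

lemma LPiForm.powHalf_propFree (k : ℕ) : (LPiForm.powHalf k).propFree := by
  induction k with
  | zero => exact ⟨trivial, trivial⟩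
  | succ k ih => exact ⟨trivial, ih⟩

lemma LPiForm.powHalf_val (k : ℕ) (V : ℕ → ℝ) :
    (LPiForm.powHalf k).val V = (1 / 2 : ℝ) ^ k := by
  induction k with
  | zero => simp [LPiForm.powHalf, LPiForm.val]
  | succ k ih => simp [LPiForm.powHalf, LPiForm.val, ih]; ring

/-- m-fold truncated sum. -/
def LPiForm.nsm : ℕ → LPiForm → LPiForm
  | 0, _ => .zero
  | m + 1, φ => .impL (.impL (LPiForm.nsm m φ) .zero) φ

lemma LPiForm.nsm_propFree (m : ℕ) (φ : LPiForm) (h : φ.propFree) :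
    (LPiForm.nsm m φ).propFree := by
  induction m with
  | zero => trivial
  | succ m ih => exact ⟨⟨ih, trivial⟩, h⟩

lemma LPiForm.nsm_val (m : ℕ) (φ : LPiForm) (c : ℝ) (h0 : 0 ≤ c)
    (hφ : ∀ V, φ.val V = c) (hm : (m : ℝ) * c ≤ 1) (V : ℕ → ℝ) :
    (LPiForm.nsm m φ).val V = m * c := by
  induction m with
  | zero => simp [LPiForm.nsm, LPiForm.val]
  | succ m ih =>
    have hm' : (m : ℝ) * c ≤ 1 := by
      have : (m : ℝ) * c ≤ (m + 1 : ℝ) * c := by nlinarith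
      push_cast at hm ⊢; linarith
    have hmc : 0 ≤ (m : ℝ) * c := by positivity
    have h1 := ih hm'
    simp only [LPiForm.nsm, LPiForm.val, h1, hφ]
    push_cast at hm ⊢
    rw [show min (1:ℝ) (1 - (m:ℝ) * c + 0) = 1 - (m:ℝ) * c by rw [min_eq_right (by linarith)]; ring]
    rw [min_eq_right (by linarith)]
    ring

/-- Every rational in [0,1] is definable by a proposition-free LΠ½-formula. -/
lemma LPiForm.exists_const (q : ℚ) (h0 : 0 ≤ q) (h1 : q ≤ 1) :
    ∃ χ : LPiForm, χ.propFree ∧ ∀ V : ℕ → ℝ, χ.val V = (q : ℝ) := by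
  set n : ℕ := q.den with hn
  set m : ℕ := q.num.toNat with hmdef
  have hnumnn : 0 ≤ q.num := Rat.num_nonneg.2 h0
  have hnum : q.num = (m : ℤ) := (Int.toNat_of_nonneg hnumnn).symm
  have hnpos : 0 < n := q.pos
  have hq : (q : ℝ) = (m : ℝ) / (n : ℝ) := by
    rw [Rat.cast_def, hnum]; push_cast; rfl
  have hmn : m ≤ n := by
    have h := Rat.num_div_den q
    have : (q.num : ℚ) ≤ (q.den : ℚ) := by
      by_contra hc
      push_neg at hc
      have hd : (0 : ℚ) < (q.den : ℚ) := by exact_mod_cast hnpos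
      have : (1 : ℚ) < q := by
        rw [← h]; rw [lt_div_iff₀ hd]; linarith
      linarith
    rw [hnum] at this
    exact_mod_cast this
  set k : ℕ := Nat.clog 2 n with hk
  have hnk : n ≤ 2 ^ k := Nat.le_pow_clog (by norm_num) n
  set c : ℝ := (1 / 2 : ℝ) ^ k with hc
  have hc0 : 0 ≤ c := by positivity
  have hcpos : 0 < c := by positivity
  have hBle : (n : ℝ) * c ≤ 1 := by
    rw [hc, div_pow, one_pow, mul_one_div, div_le_one (by positivity)]
    exact_mod_cast hnk
  have hAle : (m : ℝ) * c ≤ 1 := by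
    refine le_trans ?_ hBle
    have : (m : ℝ) ≤ n := by exact_mod_cast hmn
    nlinarith
  set A : LPiForm := LPiForm.nsm m (LPiForm.powHalf k) with hA
  set B : LPiForm := LPiForm.nsm n (LPiForm.powHalf k) with hB
  refine ⟨.impP B A, ⟨LPiForm.nsm_propFree _ _ (LPiForm.powHalf_propFree k),
    LPiForm.nsm_propFree _ _ (LPiForm.powHalf_propFree k)⟩, fun V => ?_⟩
  have hAv : A.val V = m * c :=
    LPiForm.nsm_val m _ c hc0 (LPiForm.powHalf_val k) hAle V
  have hBv : B.val V = n * c :=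
    LPiForm.nsm_val n _ c hc0 (LPiForm.powHalf_val k) hBle V
  have hBpos : (0 : ℝ) < n * c := by
    have : (0 : ℝ) < n := by exact_mod_cast hnpos
    positivity
  show (if B.val V ≤ A.val V then (1 : ℝ) else A.val V / B.val V) = (q : ℝ)
  rw [hAv, hBv, hq]
  by_cases hle : (n : ℝ) * c ≤ (m : ℝ) * c
  · rw [if_pos hle]
    have hnm : (n : ℝ) ≤ m := le_of_mul_le_mul_right hle hcpos
    have hmn' : (m : ℝ) ≤ n := by exact_mod_cast hmn
    have : (m : ℝ) = n := le_antisymm hmn' hnm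
    rw [this, div_self (by positivity)]
  · rw [if_neg hle, mul_div_mul_right _ _ (ne_of_gt hcpos)]

/-- A proposition-free LΠ½-formula has a constant rational value in [0,1]. -/
lemma LPiForm.propFree_rat (ψ : LPiForm) (h : ψ.propFree) :
    ∃ q : ℚ, 0 ≤ q ∧ q ≤ 1 ∧ ∀ V : ℕ → ℝ, ψ.val V = (q : ℝ) := by
  induction ψ with
  | zero => exact ⟨0, le_refl _, by norm_num, fun V => by simp [LPiForm.val]⟩
  | half => exact ⟨1/2, by norm_num, by norm_num, fun V => by simp [LPiForm.val]⟩
  | prop p => exact absurd h id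
  | impL φ χ ihφ ihχ =>
    obtain ⟨q1, hq10, hq11, hv1⟩ := ihφ h.1
    obtain ⟨q2, hq20, hq21, hv2⟩ := ihχ h.2
    refine ⟨min 1 (1 - q1 + q2), le_min (by norm_num) (by linarith), min_le_left _ _,
      fun V => ?_⟩
    simp only [LPiForm.val, hv1, hv2]
    push_cast
    rfl
  | conj φ χ ihφ ihχ =>
    obtain ⟨q1, hq10, hq11, hv1⟩ := ihφ h.1
    obtain ⟨q2, hq20, hq21, hv2⟩ := ihχ h.2
    refine ⟨q1 * q2, by positivity, by nlinarith, fun V => ?_⟩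
    simp only [LPiForm.val, hv1, hv2]
    push_cast
    rfl
  | impP φ χ ihφ ihχ =>
    obtain ⟨q1, hq10, hq11, hv1⟩ := ihφ h.1
    obtain ⟨q2, hq20, hq21, hv2⟩ := ihχ h.2
    by_cases hle : q1 ≤ q2
    · refine ⟨1, by norm_num, le_refl _, fun V => ?_⟩
      simp only [LPiForm.val, hv1, hv2]
      rw [if_pos (by exact_mod_cast hle)]
      norm_num
    · push_neg at hle
      have hq1pos : 0 < q1 := lt_of_le_of_lt hq20 hle
      refine ⟨q2 / q1, by positivity, by rw [div_le_one hq1pos]; linarith, fun V => ?_⟩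
      simp only [LPiForm.val, hv1, hv2]
      rw [if_neg (by push_neg; exact_mod_cast hle)]
      push_cast
      rfl

/-- RPL(⊙) and LΠ½(→_P⁻) have the same expressive power. -/
theorem RPLodot_eq_LPHimpPminus :
    (∀ φ : RPLForm, ∃ ψ : LPiForm, LPiForm.InPF ψ ∧ RLEquiv φ ψ) ∧
    (∀ ψ : LPiForm, LPiForm.InPF ψ → ∃ φ : RPLForm, RLEquiv φ ψ) := by
  constructor
  · intro φ
    induction φ with
    | const r =>
      obtain ⟨χ, hpf, hv⟩ := LPiForm.exists_const r.1 r.2.1 r.2.2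
      exact ⟨χ, .base hpf, fun V _ => (hv V).symm⟩
    | prop p => exact ⟨.prop p, .prop p, fun V _ => rfl⟩
    | impL φ ψ ihφ ihψ =>
      obtain ⟨a, ha, hva⟩ := ihφ
      obtain ⟨b, hb, hvb⟩ := ihψ
      exact ⟨.impL a b, .impL ha hb, fun V hV => by
        simp only [RPLForm.val, LPiForm.val, hva V hV, hvb V hV]⟩
    | conj φ ψ ihφ ihψ =>
      obtain ⟨a, ha, hva⟩ := ihφ
      obtain ⟨b, hb, hvb⟩ := ihψ
      exact ⟨.conj a b, .conj ha hb, fun V hV => by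
        simp only [RPLForm.val, LPiForm.val, hva V hV, hvb V hV]⟩
  · intro ψ hψ
    induction hψ with
    | base h =>
      obtain ⟨q, hq0, hq1, hv⟩ := LPiForm.propFree_rat _ h
      exact ⟨.const ⟨q, hq0, hq1⟩, fun V _ => (hv V).symm⟩
    | prop p => exact ⟨.prop p, fun V _ => rfl⟩
    | impL _ _ ihφ ihψ =>
      obtain ⟨a, hva⟩ := ihφ
      obtain ⟨b, hvb⟩ := ihψ
      exact ⟨.impL a b, fun V hV => by
        simp only [RPLForm.val, LPiForm.val, hva V hV, hvb V hV]⟩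
    | conj _ _ ihφ ihψ =>
      obtain ⟨a, hva⟩ := ihφ
      obtain ⟨b, hvb⟩ := ihψ
      exact ⟨.conj a b, fun V hV => by
        simp only [RPLForm.val, LPiForm.val, hva V hV, hvb V hV]⟩
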